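/- Let p be an odd prime and m ≥ 2 an integer with p | m. Then Ψ_{pm}(x) = Ψ_m(x·Ψ_{2p}(x)) as polynomials in ℤ[x]. -/

import Mathlib

open Polynomial

/-- The Fibonacci polynomials: `F 1 = 1`, `F 2 = X`, `F (n+2) = X * F (n+1) + F n`. -/
noncomputable def fibPoly : ℕ → Polynomial ℤ
  | 0 => 0
  | 1 => 1
  | n + 2 => X * fibPoly (n + 1) + fibPoly n

/-!
Write `L = F_{p+1} + F_{p-1}`. For odd `p` the sequence `n ↦ F_{pn}` satisfies the Fibonacci
recurrence with `X` replaced by `L`, whence `F_{pn} = F_p · F_n(L)`. Expanding both sides as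
products over divisors and cancelling inductively gives
`Ψ_n(L) · [n = 1] F_p = Ψ_{pn} · [p ∤ n] Ψ_n` for every `n ≥ 1`. The case `n = 2` reads
`X · Ψ_{2p} = L`, and the case `n = m` with `p ∣ m` is the theorem.
-/

def FibRecurrence {R : Type*} [Semiring R] (c : R) (u : ℕ → R) : Prop :=
  ∀ n, u (n + 2) = c * u (n + 1) + u n

namespace FibRecurrence

section Semiring

variable {R S : Type*} [Semiring R] [Semiring S] {c : R} {u v : ℕ → R}

theorem eq_of_eq_zero_one (hu : FibRecurrence c u) (hv : FibRecurrence c v)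
    (h0 : u 0 = v 0) (h1 : u 1 = v 1) : u = v := by
  funext n
  induction n using Nat.twoStepInduction with
  | zero => exact h0
  | one => exact h1
  | more n ihn ihn1 => rw [hu, hv, ihn, ihn1]

theorem shift (hu : FibRecurrence c u) (k : ℕ) : FibRecurrence c (fun n => u (n + k)) := by
  intro n
  simpa only [Nat.add_right_comm _ k] using hu (n + k)

theorem add (hu : FibRecurrence c u) (hv : FibRecurrence c v) :
    FibRecurrence c (fun n => u n + v n) := by
  intro n
  dsimp only
  rw [hu, hv, mul_add, add_add_add_comm]

theorem mul_const (hu : FibRecurrence c u) (a : R) : FibRecurrence c (fun n => u n * a) := by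
  intro n
  dsimp only
  rw [hu, add_mul, mul_assoc]

theorem map (hu : FibRecurrence c u) (f : R →+* S) : FibRecurrence (f c) (fun n => f (u n)) := by
  intro n
  dsimp only
  rw [hu, map_add, map_mul]

end Semiring

theorem const_mul {R : Type*} [CommSemiring R] {c : R} {u : ℕ → R} (hu : FibRecurrence c u)
    (a : R) : FibRecurrence c (fun n => a * u n) := by
  intro n
  dsimp only
  rw [hu]
  ring

end FibRecurrence

@[simp] theorem fibPoly_zero : fibPoly 0 = 0 := rfl

@[simp] theorem fibPoly_one : fibPoly 1 = 1 := rfl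

@[simp] theorem fibPoly_two : fibPoly 2 = X := by
  simp [fibPoly]

theorem fibRecurrence_fibPoly : FibRecurrence X fibPoly := fun _ => rfl

theorem fibRecurrence_fibPoly_comp (q : ℤ[X]) :
    FibRecurrence q (fun n => (fibPoly n).comp q) := by
  simpa [coe_compRingHom_apply] using fibRecurrence_fibPoly.map (compRingHom q)

theorem eval_one_fibPoly (n : ℕ) : (fibPoly n).eval 1 = Nat.fib n := by
  have hfib : FibRecurrence (1 : ℤ) (fun n => (Nat.fib n : ℤ)) := by
    intro n
    dsimp only
    rw [Nat.fib_add_two, Nat.cast_add, one_mul, add_comm]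
  have heval := fibRecurrence_fibPoly.map (evalRingHom 1)
  rw [coe_evalRingHom, eval_X] at heval
  exact congrFun (heval.eq_of_eq_zero_one hfib (by simp) (by simp)) n

theorem fibPoly_ne_zero {n : ℕ} (hn : n ≠ 0) : fibPoly n ≠ 0 := by
  intro h
  have := eval_one_fibPoly n
  rw [h, eval_zero] at this
  exact (Nat.fib_pos.mpr (Nat.pos_of_ne_zero hn)).ne' (by exact_mod_cast this.symm)

theorem fibPoly_add (m n : ℕ) :
    fibPoly (m + n + 1) = fibPoly (m + 1) * fibPoly (n + 1) + fibPoly m * fibPoly n := by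
  have hl := fibRecurrence_fibPoly.shift (n + 1)
  have hr := ((fibRecurrence_fibPoly.shift 1).mul_const (fibPoly (n + 1))).add
    (fibRecurrence_fibPoly.mul_const (fibPoly n))
  have := hl.eq_of_eq_zero_one hr (by simp) (by simp [add_comm 1, fibRecurrence_fibPoly n])
  simpa only [add_assoc] using congrFun this m

theorem fibPoly_add_one_sq (n : ℕ) :
    fibPoly (n + 1) ^ 2 = fibPoly (n + 2) * fibPoly n + (-1) ^ n := by
  induction n with
  | zero => simp
  | succ n ih =>
    rw [pow_succ]
    linear_combination fibPoly (n + 2) * fibRecurrence_fibPoly n - ih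
      - fibPoly (n + 1) * fibRecurrence_fibPoly (n + 1)

section Odd

variable {p : ℕ}

theorem fibPoly_two_mul_of_odd (hp : Odd p) :
    fibPoly (2 * p) = (fibPoly (p + 1) + fibPoly (p - 1)) * fibPoly p := by
  obtain ⟨k, rfl⟩ := hp
  rw [show 2 * (2 * k + 1) = 2 * k + (2 * k + 1) + 1 by ring, fibPoly_add]
  simp only [Nat.add_sub_cancel]
  ring

theorem fibPoly_two_mul_add_one_of_odd (hp : Odd p) :
    fibPoly (2 * p + 1) = (fibPoly (p + 1) + fibPoly (p - 1)) * fibPoly (p + 1) + 1 := by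
  obtain ⟨k, rfl⟩ := hp
  have hcassini := fibPoly_add_one_sq (2 * k)
  rw [Even.neg_one_pow (even_two_mul k)] at hcassini
  rw [show 2 * (2 * k + 1) + 1 = (2 * k + 1) + (2 * k + 1) + 1 by ring, fibPoly_add]
  simp only [Nat.add_sub_cancel]
  linear_combination hcassini

theorem fibPoly_add_two_mul_of_odd (hp : Odd p) (a : ℕ) :
    fibPoly (a + 2 * p) = (fibPoly (p + 1) + fibPoly (p - 1)) * fibPoly (a + p) + fibPoly a := by
  have hl := fibRecurrence_fibPoly.shift (2 * p)
  have hr := ((fibRecurrence_fibPoly.shift p).const_mul (fibPoly (p + 1) + fibPoly (p - 1))).add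
    fibRecurrence_fibPoly
  refine congrFun (hl.eq_of_eq_zero_one hr ?_ ?_) a
  · simp [fibPoly_two_mul_of_odd hp]
  · simp [add_comm 1, fibPoly_two_mul_add_one_of_odd hp]

theorem fibPoly_mul_of_odd (hp : Odd p) (n : ℕ) :
    fibPoly (p * n) = fibPoly p * (fibPoly n).comp (fibPoly (p + 1) + fibPoly (p - 1)) := by
  have hl : FibRecurrence (fibPoly (p + 1) + fibPoly (p - 1)) (fun n => fibPoly (p * n)) := by
    intro n
    dsimp only
    rw [show p * (n + 2) = p * n + 2 * p by ring, fibPoly_add_two_mul_of_odd hp, mul_add_one]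
  have hr := (fibRecurrence_fibPoly_comp (fibPoly (p + 1) + fibPoly (p - 1))).const_mul (fibPoly p)
  exact congrFun (hl.eq_of_eq_zero_one hr (by simp) (by simp)) n

end Odd

theorem Nat.prod_divisors_prime_mul {M : Type*} [CommMonoid M] (f : ℕ → M) {p n : ℕ}
    (hp : p.Prime) (hn : n ≠ 0) :
    ∏ e ∈ (p * n).divisors, f e = ∏ d ∈ n.divisors, f (p * d) * (if p ∣ d then 1 else f d) := by
  have hpn : p * n ≠ 0 := mul_ne_zero hp.ne_zero hn
  have hdvd : (p * n).divisors.filter (p ∣ ·) = n.divisors.image (p * ·) := by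
    ext e
    simp only [Finset.mem_filter, Finset.mem_image, Nat.mem_divisors]
    constructor
    · rintro ⟨⟨he, -⟩, d, rfl⟩
      exact ⟨d, ⟨Nat.dvd_of_mul_dvd_mul_left hp.pos he, hn⟩, rfl⟩
    · rintro ⟨d, ⟨hd, -⟩, rfl⟩
      exact ⟨⟨mul_dvd_mul_left p hd, hpn⟩, dvd_mul_right p d⟩
  have hndvd : (p * n).divisors.filter (¬p ∣ ·) = n.divisors.filter (¬p ∣ ·) := by
    ext e
    simp only [Finset.mem_filter, Nat.mem_divisors]
    constructor
    · rintro ⟨⟨he, -⟩, hpe⟩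
      exact ⟨⟨((hp.coprime_iff_not_dvd.mpr hpe).symm.dvd_of_dvd_mul_left he), hn⟩, hpe⟩
    · rintro ⟨⟨he, -⟩, hpe⟩
      exact ⟨⟨he.mul_left p, hpn⟩, hpe⟩
  rw [← Finset.prod_filter_mul_prod_filter_not _ (p ∣ ·), hdvd, hndvd,
    Finset.prod_image fun _ _ _ _ h => Nat.eq_of_mul_eq_mul_left hp.pos h,
    Finset.prod_mul_distrib, Finset.prod_filter]
  simp only [ite_not]

theorem Nat.eq_of_prod_divisors_eq {M : Type*} [CommMonoidWithZero M] [IsCancelMulZero M]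
    {f g : ℕ → M} (hg : ∀ n ≠ 0, g n ≠ 0)
    (hfg : ∀ n ≠ 0, ∏ d ∈ n.divisors, f d = ∏ d ∈ n.divisors, g d) {n : ℕ} (hn : n ≠ 0) :
    f n = g n := by
  induction n using Nat.strong_induction_on with
  | _ n ih =>
    have hproper : ∏ d ∈ n.properDivisors, f d = ∏ d ∈ n.properDivisors, g d :=
      Finset.prod_congr rfl fun d hd =>
        ih d (Nat.mem_properDivisors.mp hd).2 (Nat.pos_of_mem_properDivisors hd).ne'
    have : Nontrivial M := ⟨g 1, 0, hg 1 one_ne_zero⟩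
    have hne : ∏ d ∈ n.properDivisors, g d ≠ 0 :=
      Finset.prod_ne_zero_iff.mpr fun d hd => hg d (Nat.pos_of_mem_properDivisors hd).ne'
    have := hfg n hn
    rw [← Nat.cons_self_properDivisors hn, Finset.prod_cons, Finset.prod_cons, hproper] at this
    exact mul_right_cancel₀ hne this

section Fibotomic

variable {Ψ : ℕ → ℤ[X]}

theorem fibotomic_ne_zero (hΨprod : ∀ n, 1 ≤ n → fibPoly n = ∏ d ∈ n.divisors, Ψ d)
    {n : ℕ} (hn : n ≠ 0) : Ψ n ≠ 0 := by
  refine ne_zero_of_dvd_ne_zero (fibPoly_ne_zero hn) ?_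
  rw [hΨprod n (Nat.one_le_iff_ne_zero.mpr hn)]
  exact Finset.dvd_prod_of_mem Ψ (Nat.mem_divisors_self n hn)

theorem fibotomic_two (hΨprod : ∀ n, 1 ≤ n → fibPoly n = ∏ d ∈ n.divisors, Ψ d) : Ψ 2 = X := by
  have hΨ1 : Ψ 1 = 1 := by simpa using (hΨprod 1 le_rfl).symm
  simpa [Nat.prime_two.divisors, hΨ1] using (hΨprod 2 one_le_two).symm

theorem fibotomic_comp_lucas (hΨprod : ∀ n, 1 ≤ n → fibPoly n = ∏ d ∈ n.divisors, Ψ d)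
    {p : ℕ} (hp : p.Prime) (hodd : Odd p) {n : ℕ} (hn : n ≠ 0) :
    (Ψ n).comp (fibPoly (p + 1) + fibPoly (p - 1)) * (if n = 1 then fibPoly p else 1) =
      Ψ (p * n) * (if p ∣ n then 1 else Ψ n) := by
  refine Nat.eq_of_prod_divisors_eq
    (f := fun n => (Ψ n).comp (fibPoly (p + 1) + fibPoly (p - 1)) * if n = 1 then fibPoly p else 1)
    (g := fun n => Ψ (p * n) * if p ∣ n then 1 else Ψ n)
    (fun n hn => mul_ne_zero ?_ ?_) (fun n hn => ?_) hn
  · exact fibotomic_ne_zero hΨprod (mul_ne_zero hp.ne_zero hn)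
  · split_ifs
    exacts [one_ne_zero, fibotomic_ne_zero hΨprod hn]
  rw [← Nat.prod_divisors_prime_mul _ hp hn, Finset.prod_mul_distrib, ← prod_comp,
    Finset.prod_ite_eq' n.divisors 1, if_pos (Nat.one_mem_divisors.mpr hn),
    ← hΨprod _ (Nat.one_le_iff_ne_zero.mpr hn), ← hΨprod _ (Nat.one_le_iff_ne_zero.mpr
      (mul_ne_zero hp.ne_zero hn)), fibPoly_mul_of_odd hodd, mul_comm]

end Fibotomic

theorem fibotomic_pm_dvd_general
    (Ψ : ℕ → Polynomial ℤ)
    (hΨprod : ∀ n, 1 ≤ n → fibPoly n = ∏ d ∈ n.divisors, Ψ d)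
    (p m : ℕ) (hp : p.Prime) (hp2 : p ≠ 2) (hm : 2 ≤ m) (hpm : p ∣ m) :
    Ψ (p * m) = (Ψ m).comp (X * Ψ (2 * p)) := by
  have hodd : Odd p := hp.odd_of_ne_two hp2
  have hlucas : X * Ψ (2 * p) = fibPoly (p + 1) + fibPoly (p - 1) := by
    have h2 := fibotomic_comp_lucas hΨprod hp hodd two_ne_zero
    have hp_not_dvd_two : ¬p ∣ 2 := fun h =>
      hp2 ((Nat.prime_dvd_prime_iff_eq hp Nat.prime_two).mp h)
    rw [if_neg (by decide), if_neg hp_not_dvd_two, fibotomic_two hΨprod, X_comp, mul_one] at h2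
    rw [mul_comm, mul_comm 2 p, h2]
  have hcomp := fibotomic_comp_lucas hΨprod hp hodd (n := m) (by omega)
  rw [if_neg (by omega), if_pos hpm, mul_one, mul_one] at hcomp
  rw [hlucas, hcomp]

theorem fibotomic_pm_dvd
    (Ψ : ℕ → Polynomial ℤ) (hΨ1 : Ψ 1 = 1)
    (hΨmonic : ∀ n, 1 ≤ n → (Ψ n).Monic)
    (hΨprod : ∀ n, 1 ≤ n → fibPoly n = ∏ d ∈ n.divisors, Ψ d)
    (p m : ℕ) (hp : p.Prime) (hp2 : p ≠ 2) (hm : 2 ≤ m) (hpm : p ∣ m) :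
    Ψ (p * m) = (Ψ m).comp (X * Ψ (2 * p)) :=
  fibotomic_pm_dvd_general Ψ hΨprod p m hp hp2 hm hpm
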